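/- Let ξ be a hyperbolic isometry of a proper geodesic δ-hyperbolic space X with minimal displacement L ≥ 300δ and axis τ. Fix ε ∈ (0,δ) and a point O with |O ξ(O)| ≤ L + ε. Then O is at distance at most 28δ from τ. -/

import Mathlib

open Metric Set

variable {X : Type*} [MetricSpace X]

/-- Four-point condition for δ-hyperbolicity. -/
def FourPointHyp (X : Type*) [MetricSpace X] (δ : ℝ) : Prop :=
  ∀ x y z w : X,
    dist x y + dist z w ≤ max (dist x z + dist y w) (dist y z + dist x w) + 2 * δ

/-- `s` is a geodesic segment from `a` to `b`. -/
def IsGeodSegment {X : Type*} [MetricSpace X] (a b : X) (s : Set X) : Prop :=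
  ∃ f : ℝ → X, f 0 = a ∧ f (dist a b) = b ∧
    (∀ u ∈ Icc (0:ℝ) (dist a b), ∀ v ∈ Icc (0:ℝ) (dist a b),
      dist (f u) (f v) = |u - v|) ∧
    s = f '' Icc (0:ℝ) (dist a b)

/-- `X` is a geodesic space. -/
def IsGeodesicSpace (X : Type*) [MetricSpace X] : Prop :=
  ∀ a b : X, ∃ s : Set X, IsGeodSegment a b s

/-- `τ : ℝ → X` is a geodesic line. -/
def IsGeodLine (τ : ℝ → X) : Prop := ∀ u v : ℝ, dist (τ u) (τ v) = |u - v|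

/-- An isometry is hyperbolic if the orbit map `n ↦ ξⁿ(x)` is a quasi-isometric
embedding of `ℤ` into `X`. -/
def IsHypIsom (ξ : X ≃ᵢ X) : Prop :=
  ∃ x : X, ∃ A : ℝ, 0 < A ∧ ∃ B : ℝ, ∀ m n : ℤ,
    A * |(m : ℝ) - (n : ℝ)| - B ≤ dist ((ξ ^ m) x) ((ξ ^ n) x)

/-- An axis of `ξ`: a geodesic line joining the two fixed points of `ξ` at infinity,
equivalently a geodesic line whose image is at finite Hausdorff distance from its
`ξ`-image. -/
def IsAxis (ξ : X ≃ᵢ X) (τ : ℝ → X) : Prop :=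
  IsGeodLine τ ∧ ∃ C : ℝ,
    (∀ t : ℝ, infDist (ξ (τ t)) (range τ) ≤ C) ∧
    (∀ t : ℝ, infDist (τ t) (range fun s => ξ (τ s)) ≤ C)

/-- The orbit points `x₁ = O`, `xᵢ = ξ^{i-1}(O)` for `i > 0`, `xᵢ = ξ^{i}(O)` for
`i < 0`. -/
noncomputable def orbitPt (ξ : X ≃ᵢ X) (O : X) (i : ℤ) : X :=
  if 0 < i then (ξ ^ (i - 1)) O else (ξ ^ i) O

/-- The Voronoi cell `Dᵢ` of the orbit point `xᵢ`. -/
noncomputable def vorCell (ξ : X ≃ᵢ X) (O : X) (i : ℤ) : Set X :=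
  {y : X | ∀ j : ℤ, j ≠ 0 → dist y (orbitPt ξ O i) ≤ dist y (orbitPt ξ O j)}

/-!
Let `p`, `q` be nearest points of `τ` to `O` and `ξ O`. By the four-point condition a geodesic
line at finite Hausdorff distance from another is `4δ`-close to it, so `ξ ∘ τ` and `τ` are
`4δ`-close. Hence `|O p|` and `|ξO q|` differ by at most `4δ`, and `q` is `20δ`-close to `ξ p`,
so `|p q| ≥ L - 20δ`. Projections that far apart force
`|O ξO| ≥ |O p| + |p q| + |q ξO| - 10δ ≥ 2|O p| + L - 34δ`, and `|O ξO| ≤ L + ε` gives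
`|O p| ≤ 17δ + ε/2`.
-/

open Filter

noncomputable def gromovProduct (w x y : X) : ℝ := (dist w x + dist w y - dist x y) / 2

def IsNearestPoint (τ : ℝ → X) (x : X) (a : ℝ) : Prop := ∀ t, dist x (τ a) ≤ dist x (τ t)

section Hyperbolic

variable {δ : ℝ} {τ σ : ℝ → X} {x y : X} {a b : ℝ}

lemma gromovProduct_nonneg (w x y : X) : 0 ≤ gromovProduct w x y := by
  have := dist_triangle_left x y w
  unfold gromovProduct; linarith

lemma gromovProduct_le_dist_right (w x y : X) : gromovProduct w x y ≤ dist w y := by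
  have := dist_triangle_right w x y
  unfold gromovProduct; linarith

lemma FourPointHyp.nonneg [Nonempty X] (hyp : FourPointHyp X δ) : 0 ≤ δ := by
  obtain ⟨x⟩ := ‹Nonempty X›
  simpa using hyp x x x x

lemma FourPointHyp.min_sub_le_gromovProduct (hyp : FourPointHyp X δ) (w x y z : X) :
    min (gromovProduct w x y) (gromovProduct w y z) - δ ≤ gromovProduct w x z := by
  have h := hyp x z y w
  have := dist_comm w x; have := dist_comm w y; have := dist_comm w z; have := dist_comm y z
  unfold gromovProduct
  rcases max_cases (dist x y + dist z w) (dist z y + dist x w) with ⟨he, _⟩ | ⟨he, _⟩ <;>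
    rw [he] at h
  · exact (sub_le_sub_right (min_le_left _ _) δ).trans (by linarith)
  · exact (sub_le_sub_right (min_le_right _ _) δ).trans (by linarith)

lemma FourPointHyp.dist_le_gromovProduct_add (hyp : FourPointHyp X δ) {w a b p : X}
    (hap : dist a p = gromovProduct a w b) (hpb : dist p b = gromovProduct b w a) :
    dist w p ≤ gromovProduct w a b + 2 * δ := by
  have h := hyp w p a b
  have := dist_comm w a; have := dist_comm w b; have := dist_comm p a; have := dist_comm a b
  unfold gromovProduct at *
  have e₁ : dist w a + dist p b = (dist w a + dist w b + dist a b) / 2 := by linarith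
  have e₂ : dist p a + dist w b = (dist w a + dist w b + dist a b) / 2 := by linarith
  rw [e₁, e₂, max_self] at h
  linarith

namespace IsGeodLine

lemma isometry (hτ : IsGeodLine τ) : Isometry τ :=
  Isometry.of_dist_eq fun u v => by rw [hτ, Real.dist_eq]

lemma exists_isNearestPoint (hτ : IsGeodLine τ) (x : X) : ∃ a, IsNearestPoint τ x a := by
  have hlim : Tendsto (fun t => dist x (τ t)) (cocompact ℝ) atTop := by
    refine tendsto_atTop_mono (fun t => ?_)
      (tendsto_atTop_add_const_right _ (-dist (τ 0) x) (tendsto_dist_left_cocompact_atTop 0))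
    have := dist_triangle (τ 0) x (τ t)
    rw [hτ, ← Real.dist_eq] at this
    linarith
  exact (continuous_const.dist hτ.isometry.continuous).exists_forall_le hlim

lemma exists_between (hτ : IsGeodLine τ) (u v : ℝ) {r : ℝ} (h0 : 0 ≤ r)
    (hr : r ≤ dist (τ u) (τ v)) :
    ∃ t, dist (τ u) (τ t) = r ∧ dist (τ t) (τ v) = dist (τ u) (τ v) - r := by
  simp only [show ∀ s t, dist (τ s) (τ t) = |s - t| from hτ] at hr ⊢
  rcases le_total u v with h | h
  · exact ⟨u + r, by grind, by grind⟩
  · exact ⟨u - r, by grind, by grind⟩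

lemma exists_dist_le_gromovProduct_add (hyp : FourPointHyp X δ) (hτ : IsGeodLine τ) (w : X)
    (u v : ℝ) : ∃ t, dist w (τ t) ≤ gromovProduct w (τ u) (τ v) + 2 * δ := by
  obtain ⟨t, hut, htv⟩ := hτ.exists_between u v (gromovProduct_nonneg _ w _)
    (gromovProduct_le_dist_right _ w _)
  refine ⟨t, hyp.dist_le_gromovProduct_add hut ?_⟩
  have := dist_comm (τ u) w; have := dist_comm (τ v) w; have := dist_comm (τ v) (τ u)
  rw [htv]; unfold gromovProduct; linarith

end IsGeodLine

namespace IsNearestPoint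

lemma infDist_eq (ha : IsNearestPoint τ x a) : infDist x (range τ) = dist x (τ a) :=
  le_antisymm (infDist_le_dist_of_mem (mem_range_self a))
    ((le_infDist (range_nonempty τ)).2 (forall_mem_range.2 ha))

lemma dist_add_dist_le (hyp : FourPointHyp X δ) (hτ : IsGeodLine τ) (ha : IsNearestPoint τ x a)
    (t : ℝ) : dist x (τ a) + dist (τ a) (τ t) ≤ dist x (τ t) + 4 * δ := by
  -- With `P = (x|τ t)_{τ a}` and `τ t'` between `τ a` and `τ t` at distance `P` from `τ a`:
  -- `(τ t|τ t')_{τ a} = P`, while `(x|τ t')_{τ a} ≤ P / 2` as `τ a` is nearest to `x`.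
  obtain ⟨t', hat', ht't⟩ := hτ.exists_between a t (gromovProduct_nonneg _ x _)
    (gromovProduct_le_dist_right _ x _)
  have h := hyp.min_sub_le_gromovProduct (τ a) x (τ t) (τ t')
  have hself : gromovProduct (τ a) (τ t) (τ t') = gromovProduct (τ a) x (τ t) := by
    conv_lhs => unfold gromovProduct
    rw [hat', dist_comm (τ t), ht't]; ring
  have hnear : gromovProduct (τ a) x (τ t') ≤ gromovProduct (τ a) x (τ t) / 2 := by
    have := ha t'; have := dist_comm (τ a) x
    conv_lhs => unfold gromovProduct
    rw [hat']; linarith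
  rw [hself, min_self] at h
  have := dist_comm (τ a) x
  unfold gromovProduct at h hnear; linarith

end IsNearestPoint

lemma IsGeodLine.exists_dist_le_of_forall_infDist_le (hyp : FourPointHyp X δ)
    (hσ : IsGeodLine σ) (hτ : IsGeodLine τ) {C : ℝ} (hC : ∀ t, infDist (σ t) (range τ) ≤ C)
    (s : ℝ) : ∃ t, dist (σ s) (τ t) ≤ 4 * δ := by
  have : Nonempty X := ⟨σ 0⟩
  have hδ := hyp.nonneg
  have hC₀ : 0 ≤ C := infDist_nonneg.trans (hC 0)
  set T := C + 2 * δ + 1 with hT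
  obtain ⟨a, ha⟩ := hτ.exists_isNearestPoint (σ (s - T))
  obtain ⟨b, hb⟩ := hτ.exists_isNearestPoint (σ (s + T))
  have hya : dist (σ (s - T)) (τ a) ≤ C := ha.infDist_eq ▸ hC _
  have hzb : dist (σ (s + T)) (τ b) ≤ C := hb.infDist_eq ▸ hC _
  have hwy : dist (σ s) (σ (s - T)) = T := by rw [hσ]; grind
  have hwz : dist (σ s) (σ (s + T)) = T := by rw [hσ]; grind
  have hyz : dist (σ (s - T)) (σ (s + T)) = 2 * T := by rw [hσ]; grind
  have h₀ : gromovProduct (σ s) (σ (s - T)) (σ (s + T)) = 0 := by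
    unfold gromovProduct; rw [hwy, hwz, hyz]; ring
  have h₁ : T - C ≤ gromovProduct (σ s) (σ (s - T)) (τ a) := by
    have := dist_triangle (σ s) (τ a) (σ (s - T)); have := dist_comm (τ a) (σ (s - T))
    unfold gromovProduct; linarith
  have h₂ : T - C ≤ gromovProduct (σ s) (τ b) (σ (s + T)) := by
    have := dist_triangle (σ s) (τ b) (σ (s + T)); have := dist_comm (τ b) (σ (s + T))
    unfold gromovProduct; linarith
  have h₃ := hyp.min_sub_le_gromovProduct (σ s) (σ (s - T)) (τ a) (σ (s + T))
  have h₄ := hyp.min_sub_le_gromovProduct (σ s) (τ a) (τ b) (σ (s + T))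
  -- `(σ (s - T)|σ (s + T))_{σ s} = 0` while the two outer products exceed `2δ`
  have hab : gromovProduct (σ s) (τ a) (τ b) ≤ 2 * δ := by
    rcases min_le_iff.1 (sub_nonpos.1 (h₃.trans h₀.le)) with h | h <;>
      rcases min_le_iff.1 (sub_le_iff_le_add.1 h₄) with h' | h' <;> linarith
  obtain ⟨t, ht⟩ := hτ.exists_dist_le_gromovProduct_add hyp (σ s) a b
  exact ⟨t, by linarith⟩

lemma IsNearestPoint.dist_add_dist_add_dist_le (hyp : FourPointHyp X δ) (hτ : IsGeodLine τ)
    (ha : IsNearestPoint τ x a) (hb : IsNearestPoint τ y b) (hab : 5 * δ < dist (τ a) (τ b)) :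
    dist x (τ a) + dist (τ a) (τ b) + dist (τ b) y ≤ dist x y + 10 * δ := by
  have hx := ha.dist_add_dist_le hyp hτ b
  have hy := hb.dist_add_dist_le hyp hτ a
  -- `(x|τ a)_{τ b} ≥ |τ a τ b| - 2δ > 3δ` and `(y|τ a)_{τ b} ≤ 2δ`, hence `(y|x)_{τ b} ≤ 3δ`
  have h := hyp.min_sub_le_gromovProduct (τ b) y x (τ a)
  have := dist_comm (τ b) x; have := dist_comm (τ b) y; have := dist_comm (τ b) (τ a)
  have := dist_comm y x
  unfold gromovProduct at h
  rcases min_le_iff.1 (sub_le_iff_le_add.1 h) with h' | h' <;> linarith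

end Hyperbolic

theorem stmt10_general {X : Type*} [MetricSpace X] (δ ε L : ℝ)
    (hδ : 0 < δ) (hεδ : ε < δ)
    (hyp : FourPointHyp X δ)
    (ξ : X ≃ᵢ X) (τ : ℝ → X) (hax : IsAxis ξ τ)
    (hL : L = ⨅ x : X, dist x (ξ x)) (hL300 : 300 * δ ≤ L)
    (O : X) (hO : dist O (ξ O) ≤ L + ε) :
    infDist O (range τ) ≤ 28 * δ := by
  obtain ⟨hτ, C, hξτ_near, hτ_near⟩ := hax
  have hξτ : IsGeodLine fun s => ξ (τ s) := fun u v => (ξ.dist_eq _ _).trans (hτ u v)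
  have hdisp : ∀ x, L ≤ dist x (ξ x) := fun x =>
    hL ▸ ciInf_le ⟨0, by rintro _ ⟨y, rfl⟩; exact dist_nonneg⟩ x
  obtain ⟨a, ha⟩ := hτ.exists_isNearestPoint O
  obtain ⟨b, hb⟩ := hτ.exists_isNearestPoint (ξ O)
  obtain ⟨c, hc⟩ := hξτ.exists_dist_le_of_forall_infDist_le hyp hτ hξτ_near a
  obtain ⟨w, hw⟩ := hτ.exists_dist_le_of_forall_infDist_le hyp hξτ hτ_near b
  have hOa : dist O (τ a) ≤ dist (ξ O) (τ b) + 4 * δ :=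
    calc dist O (τ a) ≤ dist O (τ w) := ha w
      _ = dist (ξ O) (ξ (τ w)) := (ξ.dist_eq _ _).symm
      _ ≤ dist (ξ O) (τ b) + dist (τ b) (ξ (τ w)) := dist_triangle _ _ _
      _ ≤ dist (ξ O) (τ b) + 4 * δ := by gcongr
  have hξOc : dist (ξ O) (τ c) ≤ dist O (τ a) + 4 * δ :=
    calc dist (ξ O) (τ c) ≤ dist (ξ O) (ξ (τ a)) + dist (ξ (τ a)) (τ c) := dist_triangle _ _ _
      _ ≤ dist O (τ a) + 4 * δ := by rw [ξ.dist_eq]; gcongr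
  have hbc : dist (τ b) (τ c) ≤ 16 * δ := by
    linarith [hb.dist_add_dist_le hyp hτ c]
  have hab : L - 20 * δ ≤ dist (τ a) (τ b) := by
    linarith [hdisp (τ a), dist_triangle4 (τ a) (τ b) (τ c) (ξ (τ a)), dist_comm (τ c) (ξ (τ a))]
  have key := ha.dist_add_dist_add_dist_le hyp hτ hb (by linarith)
  rw [ha.infDist_eq]
  linarith [dist_comm (τ b) (ξ O)]

/-- If `ξ` is a hyperbolic isometry of a proper geodesic δ-hyperbolic space with
minimal displacement `L ≥ 300δ` and axis `τ`, and `|O ξ(O)| ≤ L + ε` with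
`0 < ε < δ`, then `O` is at distance at most `28δ` from `τ`. -/
theorem stmt10 {X : Type*} [MetricSpace X] [ProperSpace X] (δ ε L : ℝ)
    (hδ : 0 < δ) (hε : 0 < ε) (hεδ : ε < δ)
    (hyp : FourPointHyp X δ) (hgeo : IsGeodesicSpace X)
    (ξ : X ≃ᵢ X) (hhyp : IsHypIsom ξ) (τ : ℝ → X) (hax : IsAxis ξ τ)
    (hL : L = ⨅ x : X, dist x (ξ x)) (hL300 : 300 * δ ≤ L)
    (O : X) (hO : dist O (ξ O) ≤ L + ε) :
    infDist O (range τ) ≤ 28 * δ :=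
  stmt10_general δ ε L hδ hεδ hyp ξ τ hax hL hL300 O hO
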